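/- arXiv:2510.14610 — 2 statements merged into one kernel-verified Lean document; each statement's English description precedes it below -/
import Mathlib

section
/- Suppose α_i = −β′_i and β_i = −α′_i for each i = 1, …, n−1. Then the linear map φ : T*g → T*g defined on the basis by φ(z) = (−1)^n z, φ(e_j) = (−1)^{n−j+1} f_j, φ(f_j) = (−1)^{n−j} e_j for j = 1, …, n, and φ(t) = t, is an isomorphism of left-symmetric structures from (T*g, ∆_{(α,β)}) to (T*g, ∆_{(α′,β′)}); in particular it is a Lie algebra automorphism of T*g and satisfies φ(x ∆_{(α,β)} y) = φ(x) ∆_{(α′,β′)} φ(y) for all x, y. -/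
namespace Paper

open Finset

/-- Index type for the basis {z, e_1,…,e_n, f_1,…,f_n, t} of the cotangent Lie algebra
`T*g` of `g = ℝ ⋉_{J_n(0)} ℝ^n`.  The constructor `Bas.e i` (with `i : Fin n`)
represents the basis vector `e_{i+1}` (math indexing `1,…,n`), similarly `Bas.f i`. -/
inductive Bas (n : ℕ) : Type
  | z : Bas n
  | t : Bas n
  | e : Fin n → Bas n
  | f : Fin n → Bas n
  deriving DecidableEq

/-- The underlying vector space of `T*g`, as coordinate functions on the basis. -/
abbrev V (n : ℕ) : Type := Bas n → ℝ

/-- The basis vectors of `T*g`. -/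
noncomputable def bas (n : ℕ) (b : Bas n) : V n := Pi.single b 1

/-- The Lie bracket of `T*g`: the bilinear extension of
`[t, e_{i+1}] = e_i`, `[t, f_{i+1}] = -f_i`, `[e_{i+1}, f_{n-i+1}] = z` for `i = 1,…,n-1`
(math indexing), all other brackets of basis vectors being zero. -/
noncomputable def bracket (n : ℕ) (x y : V n) : V n := fun b =>
  match b with
  | Bas.z => ∑ i : Fin n, ∑ j : Fin n,
      (if (i : ℕ) + (j : ℕ) = n then
        x (Bas.e i) * y (Bas.f j) - x (Bas.f j) * y (Bas.e i) else 0)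
  | Bas.t => 0
  | Bas.e k => if h : (k : ℕ) + 1 < n then
      x Bas.t * y (Bas.e ⟨(k : ℕ) + 1, h⟩) - x (Bas.e ⟨(k : ℕ) + 1, h⟩) * y Bas.t else 0
  | Bas.f k => if h : (k : ℕ) + 1 < n then
      -(x Bas.t * y (Bas.f ⟨(k : ℕ) + 1, h⟩)) + x (Bas.f ⟨(k : ℕ) + 1, h⟩) * y Bas.t else 0

/-- `αseq α i = α_i = (i(α-1)+1)/((α-1)(i-1)+1)`. -/
noncomputable def αseq (α : ℝ) (i : ℕ) : ℝ :=
  ((i : ℝ) * (α - 1) + 1) / ((α - 1) * ((i : ℝ) - 1) + 1)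

/-- `βseq β i = β_i = (i(β+1)-1)/(-(β+1)(i-1)+1)`. -/
noncomputable def βseq (β : ℝ) (i : ℕ) : ℝ :=
  ((i : ℝ) * (β + 1) - 1) / (-(β + 1) * ((i : ℝ) - 1) + 1)

/-- `γseq n α β i = γ_i = (α-1)((n-i)(β+1)-1)/(n(α-1)(β+1)-(α-1)+β+1)`. -/
noncomputable def γseq (n : ℕ) (α β : ℝ) (i : ℕ) : ℝ :=
  ((α - 1) * (((n : ℝ) - (i : ℝ)) * (β + 1) - 1)) /
    ((n : ℝ) * (α - 1) * (β + 1) - (α - 1) + β + 1)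

/-- The standing conditions on `α, β`:
`k(α-1)+1 ≠ 0` and `k(β+1)-1 ≠ 0` for all integers `k ≥ 1`, and
`n(α-1)(β+1) - α + β + 2 ≠ 0`. -/
def Cond (n : ℕ) (α β : ℝ) : Prop :=
  (∀ k : ℕ, 1 ≤ k → (k : ℝ) * (α - 1) + 1 ≠ 0) ∧
  (∀ k : ℕ, 1 ≤ k → (k : ℝ) * (β + 1) - 1 ≠ 0) ∧
  (n : ℝ) * (α - 1) * (β + 1) - α + β + 2 ≠ 0

/-- The product `∆_{(α,β)}` on `T*g`: the bilinear extension of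
`t ∆ e_{i+1} = α_i e_i`, `e_{i+1} ∆ t = (α_i - 1) e_i`, `t ∆ f_{i+1} = β_i f_i`,
`f_{i+1} ∆ t = (β_i + 1) f_i`, `e_{i+1} ∆ f_{n-i+1} = γ_i z`,
`f_{n-i+1} ∆ e_{i+1} = (γ_i - 1) z` for `i = 1,…,n-1` (math indexing),
all other products of basis vectors being zero. -/
noncomputable def lsa (n : ℕ) (α β : ℝ) (x y : V n) : V n := fun b =>
  match b with
  | Bas.z => ∑ i : Fin n, ∑ j : Fin n,
      (if (i : ℕ) + (j : ℕ) = n then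
        γseq n α β (i : ℕ) * (x (Bas.e i) * y (Bas.f j))
          + (γseq n α β (i : ℕ) - 1) * (x (Bas.f j) * y (Bas.e i))
      else 0)
  | Bas.t => 0
  | Bas.e k => if h : (k : ℕ) + 1 < n then
      αseq α ((k : ℕ) + 1) * (x Bas.t * y (Bas.e ⟨(k : ℕ) + 1, h⟩))
        + (αseq α ((k : ℕ) + 1) - 1) * (x (Bas.e ⟨(k : ℕ) + 1, h⟩) * y Bas.t)
      else 0
  | Bas.f k => if h : (k : ℕ) + 1 < n then
      βseq β ((k : ℕ) + 1) * (x Bas.t * y (Bas.f ⟨(k : ℕ) + 1, h⟩))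
        + (βseq β ((k : ℕ) + 1) + 1) * (x (Bas.f ⟨(k : ℕ) + 1, h⟩) * y Bas.t)
      else 0

/-- `D` is a left-symmetric structure on `T*g`: the associator is symmetric in the
first two arguments and `x∆y - y∆x = [x,y]`. -/
def IsLSA (n : ℕ) (D : V n → V n → V n) : Prop :=
  (∀ x y z : V n, D x (D y z) - D (D x y) z = D y (D x z) - D (D y x) z) ∧
  (∀ x y : V n, D x y - D y x = bracket n x y)

/-- Completeness: every right translation `y ↦ y ∆ x` is nilpotent. -/
def IsComplete (n : ℕ) (D : V n → V n → V n) : Prop :=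
  ∀ x : V n, ∃ m : ℕ, ∀ y : V n, (fun w => D w x)^[m] y = 0

/-- Bilinearity of a product. -/
def IsBilin (n : ℕ) (D : V n → V n → V n) : Prop :=
  (∀ (c : ℝ) (x x' y : V n), D (c • x + x') y = c • D x y + D x' y) ∧
  (∀ (c : ℝ) (x y y' : V n), D x (c • y + y') = c • D x y + D x y')

/-- Two left-symmetric structures on `T*g` are isomorphic if some Lie algebra
automorphism of `T*g` intertwines the products. -/
def LSAIso (n : ℕ) (D D' : V n → V n → V n) : Prop :=
  ∃ φ : V n ≃ₗ[ℝ] V n,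
    (∀ x y, φ (bracket n x y) = bracket n (φ x) (φ y)) ∧
    (∀ x y, φ (D x y) = D' (φ x) (φ y))

/-- The 2-form `ω_λ = t* ∧ z* + ∑ λ_i e_i* ∧ f_{n-i+1}*` with `λ_i = λ - i + 1`. -/
noncomputable def omegaForm (n : ℕ) (lam : ℝ) (x y : V n) : ℝ :=
  (x Bas.t * y Bas.z - x Bas.z * y Bas.t) +
  ∑ i : Fin n, (lam - ((i : ℕ) : ℝ)) *
    (x (Bas.e i) * y (Bas.f ⟨n - 1 - (i : ℕ), by have := i.isLt; omega⟩)
      - x (Bas.f ⟨n - 1 - (i : ℕ), by have := i.isLt; omega⟩) * y (Bas.e i))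

/-- Two symplectic forms on `T*g` are symplectomorphic up to homothety if some Lie
algebra automorphism pulls one back to a nonzero multiple of the other. -/
def SympIso (n : ℕ) (ω ω' : V n → V n → ℝ) : Prop :=
  ∃ φ : V n ≃ₗ[ℝ] V n,
    (∀ x y, φ (bracket n x y) = bracket n (φ x) (φ y)) ∧
    ∃ c : ℝ, c ≠ 0 ∧ ∀ x y, ω' (φ x) (φ y) = c * ω x y

/-- `ω` is a symplectic structure on `T*g`. -/
def IsSymplectic (n : ℕ) (ω : V n → V n → ℝ) : Prop :=
  (∀ (c : ℝ) (x x' y : V n), ω (c • x + x') y = c * ω x y + ω x' y) ∧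
  (∀ x y : V n, ω x y = - ω y x) ∧
  (∀ x : V n, (∀ y, ω x y = 0) → x = 0) ∧
  (∀ x y z : V n, ω x (bracket n y z) + ω y (bracket n z x) + ω z (bracket n x y) = 0)

/-- The linear map `φ : T*g → T*g` with `φ(z) = (-1)^n z`, `φ(e_j) = (-1)^{n-j+1} f_j`,
`φ(f_j) = (-1)^{n-j} e_j` (math indexing `j = 1,…,n`) and `φ(t) = t`, written in
coordinates. -/
noncomputable def phiMap (n : ℕ) (x : V n) : V n := fun b =>
  match b with
  | Bas.z => (-1 : ℝ) ^ n * x Bas.z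
  | Bas.t => x Bas.t
  | Bas.e j => (-1 : ℝ) ^ (n - (j : ℕ) - 1) * x (Bas.f j)
  | Bas.f j => (-1 : ℝ) ^ (n - (j : ℕ)) * x (Bas.e j)

/-! In coordinates, `φ` exchanges the `e`- and `f`-lines up to signs, so conjugating any
product with the support pattern of `∆_{(α,β)}` by `φ` exchanges the `t ∆ e`/`t ∆ f`
coefficients (negated) and reflects the `e ∆ f` coefficients `i ↦ n - i`. The condition at
`i = 1` forces `α' = -β`, `β' = -α`, and then `α_i(-β) = -β_i(β)`, `β_i(-α) = -α_i(α)` and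
`γ_i(α, β) + γ_{n-i}(-β, -α) = 1` are exactly the required coefficient relations. The bracket
is the special case with constant coefficients, and `φ⁴ = id`. -/

lemma neg_one_pow_sub_of_lt {R : Type*} [Ring R] {m k : ℕ} (h : k < m) :
    (-1 : R) ^ (m - k) = -(-1) ^ (m - (k + 1)) := by
  rw [show m - k = m - (k + 1) + 1 by omega, pow_succ, mul_neg_one]

lemma neg_one_pow_mul_neg_one_pow_of_add_eq {R : Type*} [Ring R] {n u v : ℕ}
    (huv : u + v = n) (hv : v < n) :
    (-1 : R) ^ (n - v - 1) * (-1) ^ (n - u) = -(-1) ^ n := by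
  have h := neg_one_pow_sub_of_lt (R := R) (show 0 < n by omega)
  rw [Nat.sub_zero, zero_add] at h
  rw [← pow_add, show n - v - 1 + (n - u) = n - 1 by omega, h, neg_neg]

/-- The product with `t ∆ e_{i+1} = a_i e_i`, `e_{i+1} ∆ t = a'_i e_i`, `t ∆ f_{i+1} = b_i f_i`,
`f_{i+1} ∆ t = b'_i f_i`, `e_{i+1} ∆ f_{n-i+1} = c_i z`, `f_{n-i+1} ∆ e_{i+1} = c'_i z`
(paper indexing, as in `lsa`). -/
noncomputable def prodOfCoeffs (n : ℕ) (a a' b b' c c' : ℕ → ℝ) (x y : V n) : V n := fun b₀ =>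
  match b₀ with
  | Bas.z => ∑ i : Fin n, ∑ j : Fin n,
      (if (i : ℕ) + (j : ℕ) = n then
        c i * (x (Bas.e i) * y (Bas.f j)) + c' i * (x (Bas.f j) * y (Bas.e i))
      else 0)
  | Bas.t => 0
  | Bas.e k => if h : (k : ℕ) + 1 < n then
      a (k + 1) * (x Bas.t * y (Bas.e ⟨k + 1, h⟩)) + a' (k + 1) * (x (Bas.e ⟨k + 1, h⟩) * y Bas.t)
      else 0
  | Bas.f k => if h : (k : ℕ) + 1 < n then
      b (k + 1) * (x Bas.t * y (Bas.f ⟨k + 1, h⟩)) + b' (k + 1) * (x (Bas.f ⟨k + 1, h⟩) * y Bas.t)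
      else 0

lemma phiMap_prodOfCoeffs {n : ℕ} {a a' b b' c c' A A' B B' C C' : ℕ → ℝ}
    (hA : ∀ i, A i = -b i) (hA' : ∀ i, A' i = -b' i)
    (hB : ∀ i, B i = -a i) (hB' : ∀ i, B' i = -a' i)
    (hC : ∀ i j, i + j = n → C j = -c' i ∧ C' j = -c i) (x y : V n) :
    phiMap n (prodOfCoeffs n a a' b b' c c' x y) =
      prodOfCoeffs n A A' B B' C C' (phiMap n x) (phiMap n y) := by
  funext b₀
  cases b₀ with
  | t => rfl
  | z =>
    simp only [phiMap, prodOfCoeffs, Finset.mul_sum]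
    conv_rhs => rw [Finset.sum_comm]
    refine Finset.sum_congr rfl fun u _ => Finset.sum_congr rfl fun v _ => ?_
    split_ifs with huv hvu hvu
    · obtain ⟨hCv, hC'v⟩ := hC u v huv
      have hsign := neg_one_pow_mul_neg_one_pow_of_add_eq (R := ℝ) huv v.isLt
      rw [hCv, hC'v]
      linear_combination (c u * x (Bas.e u) * y (Bas.f v) + c' u * x (Bas.f v) * y (Bas.e u)) * hsign
    · omega
    · omega
    · exact mul_zero _
  | e k =>
    simp only [phiMap, prodOfCoeffs]
    split_ifs with hk
    · have hsign : (-1 : ℝ) ^ (n - k - 1) = -(-1) ^ (n - (k + 1) - 1) := by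
        simpa only [Nat.sub_sub] using neg_one_pow_sub_of_lt (R := ℝ) hk
      rw [hA, hA', hsign]
      ring
    · exact mul_zero _
  | f k =>
    simp only [phiMap, prodOfCoeffs]
    split_ifs with hk
    · rw [hB, hB', neg_one_pow_sub_of_lt (R := ℝ) k.isLt]
      ring
    · exact mul_zero _

lemma bracket_eq_prodOfCoeffs (n : ℕ) : bracket n = prodOfCoeffs n 1 (-1) (-1) 1 1 (-1) := by
  funext x y b
  cases b <;> simp [bracket, prodOfCoeffs, sub_eq_add_neg]

lemma phiMap_bracket (n : ℕ) (x y : V n) :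
    phiMap n (bracket n x y) = bracket n (phiMap n x) (phiMap n y) := by
  rw [bracket_eq_prodOfCoeffs]
  exact phiMap_prodOfCoeffs (fun _ => by simp) (fun _ => by simp) (fun _ => by simp)
    (fun _ => by simp) (fun _ _ _ => by simp) x y

lemma lsa_eq_prodOfCoeffs (n : ℕ) (α β : ℝ) :
    lsa n α β = prodOfCoeffs n (αseq α) (fun i => αseq α i - 1) (βseq β) (fun i => βseq β i + 1)
      (γseq n α β) (fun i => γseq n α β i - 1) :=
  rfl

lemma αseq_one (α : ℝ) : αseq α 1 = α := by
  simp [αseq]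

lemma βseq_one (β : ℝ) : βseq β 1 = β := by
  simp [βseq]

lemma αseq_neg (β : ℝ) (i : ℕ) : αseq (-β) i = -βseq β i := by
  rw [αseq, βseq, ← neg_div]
  congr 1 <;> ring

lemma βseq_neg (α : ℝ) (i : ℕ) : βseq (-α) i = -αseq α i := by
  rw [αseq, βseq, ← neg_div]
  congr 1 <;> ring

lemma γseq_add_γseq_neg {n i j : ℕ} {α β : ℝ}
    (hD : (n : ℝ) * (α - 1) * (β + 1) - α + β + 2 ≠ 0) (hij : i + j = n) :
    γseq n α β i + γseq n (-β) (-α) j = 1 := by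
  have hj : (j : ℝ) = n - i := by rw [← hij]; push_cast; ring
  have hden : (n : ℝ) * (-β - 1) * (-α + 1) - (-β - 1) + -α + 1 =
      n * (α - 1) * (β + 1) - (α - 1) + β + 1 := by ring
  rw [γseq, γseq, hden, ← add_div, div_eq_one_iff_eq (by contrapose! hD; linarith), hj]
  ring

lemma phiMap_lsa {n : ℕ} {α β : ℝ} (hD : (n : ℝ) * (α - 1) * (β + 1) - α + β + 2 ≠ 0)
    (x y : V n) :
    phiMap n (lsa n α β x y) = lsa n (-β) (-α) (phiMap n x) (phiMap n y) := by
  rw [lsa_eq_prodOfCoeffs, lsa_eq_prodOfCoeffs]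
  refine phiMap_prodOfCoeffs (αseq_neg β) (fun i => ?_) (βseq_neg α) (fun i => ?_)
    (fun i j hij => ?_) x y
  · rw [αseq_neg]; ring
  · rw [βseq_neg]; ring
  · have h := γseq_add_γseq_neg (α := α) (β := β) hD hij
    constructor <;> linarith

lemma phiMap_add_smul (n : ℕ) (c : ℝ) (x y : V n) :
    phiMap n (c • x + y) = c • phiMap n x + phiMap n y := by
  funext b
  cases b <;> simp only [phiMap, Pi.add_apply, Pi.smul_apply, smul_eq_mul] <;> ring

lemma phiMap_iterate_four (n : ℕ) : (phiMap n)^[4] = id := by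
  funext x b
  cases b with
  | z => simp [phiMap, ← mul_assoc, ← pow_add]
  | t => rfl
  | e j | f j =>
    simp only [Function.iterate_succ, Function.iterate_zero, Function.comp_apply, id, phiMap,
      ← mul_assoc, ← pow_add]
    rw [Even.neg_one_pow (by rw [Nat.even_iff]; omega), one_mul]

lemma phiMap_bijective (n : ℕ) : Function.Bijective (phiMap n) := by
  have h := phiMap_iterate_four n
  refine Function.bijective_iff_has_inverse.2 ⟨(phiMap n)^[3], ?_, ?_⟩
  · exact congrFun ((Function.iterate_succ (phiMap n) 3).symm.trans h)
  · exact congrFun ((Function.iterate_succ' (phiMap n) 3).symm.trans h)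

theorem stmt12_general (n : ℕ) (hn : 2 ≤ n) (α β α' β' : ℝ)
    (hc : Cond n α β)
    (hsym : ∀ i : ℕ, 1 ≤ i → i ≤ n - 1 → αseq α i = -βseq β' i ∧ βseq β i = -αseq α' i) :
    (∀ (c : ℝ) (x y : V n), phiMap n (c • x + y) = c • phiMap n x + phiMap n y) ∧
    Function.Bijective (phiMap n) ∧
    (∀ x y, phiMap n (bracket n x y) = bracket n (phiMap n x) (phiMap n y)) ∧
    (∀ x y, phiMap n (lsa n α β x y) = lsa n α' β' (phiMap n x) (phiMap n y)) := by
  obtain ⟨rfl, rfl⟩ : α' = -β ∧ β' = -α := by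
    have h := hsym 1 le_rfl (by omega)
    rw [αseq_one, αseq_one, βseq_one, βseq_one] at h
    constructor <;> linarith [h.1, h.2]
  exact ⟨phiMap_add_smul n, phiMap_bijective n, phiMap_bracket n, phiMap_lsa hc.2.2⟩

/-- if `α_i = -β'_i` and `β_i = -α'_i` for `i = 1,…,n-1`, then the map
`φ` with `φ(z) = (-1)^n z`, `φ(e_j) = (-1)^{n-j+1} f_j`, `φ(f_j) = (-1)^{n-j} e_j`,
`φ(t) = t` is a Lie algebra automorphism of `T*g` intertwining `∆_{(α,β)}` and
`∆_{(α',β')}`. -/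
theorem stmt12 (n : ℕ) (hn : 2 ≤ n) (α β α' β' : ℝ)
    (hc : Cond n α β) (hc' : Cond n α' β')
    (hsym : ∀ i : ℕ, 1 ≤ i → i ≤ n - 1 → αseq α i = -βseq β' i ∧ βseq β i = -αseq α' i) :
    (∀ (c : ℝ) (x y : V n), phiMap n (c • x + y) = c • phiMap n x + phiMap n y) ∧
    Function.Bijective (phiMap n) ∧
    (∀ x y, phiMap n (bracket n x y) = bracket n (phiMap n x) (phiMap n y)) ∧
    (∀ x y, phiMap n (lsa n α β x y) = lsa n α' β' (phiMap n x) (phiMap n y)) :=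
  stmt12_general n hn α β α' β' hc hsym

end Paper
end

section
/- For every real number λ ∉ ℤ, the left-symmetric structure ∆_{ω_λ} on T*g induced by the symplectic structure ω_λ coincides with the left-symmetric structure ∆_{(α,β)}, where α = (λ−1)/λ and β = −(λ−n+2)/(λ−n+1). -/
/-!
`ω_λ` pairs `t` with `z` and `e_{k+1}` with `f_{n-k}`, with weight `λ - k`; since
`λ ∉ ℤ`, every weight is nonzero, so each coordinate of a vector `v` is read off from
`ω_λ(v, w)` for a suitable basis vector `w`. Taking `v = x ∆ y`, the identity
`ω_λ(x ∆ y, w) = -ω_λ(y, [x, w])` expresses every coordinate of `x ∆ y` through brackets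
with basis vectors. For `α = (λ-1)/λ` and `β = -(λ-n+2)/(λ-n+1)` the structure constants
of `∆_{(α,β)}` collapse to `α_m = (λ-m)/(λ-m+1)`, `β_m = -(λ-n+1+m)/(λ-n+m)` and
`γ_i = λ-i+1`, which are exactly the constants obtained this way (for the `z`-coordinate
after a shift of the summation index).
-/

namespace Paper

open Finset

section Sums

variable {M : Type*} [AddCommMonoid M] {n : ℕ}

lemma sum_range_ite_eq_of_iff (p : ℕ → Prop) [DecidablePred p] (g : ℕ → M) {a : ℕ}
    (hp : ∀ i < n, p i ↔ i = a) :
    ∑ i ∈ range n, (if p i then g i else 0) = if a < n then g a else 0 := by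
  rw [sum_congr rfl fun i hi => if_congr (hp i (mem_range.1 hi)) rfl rfl, sum_ite_eq']
  simp only [mem_range]

lemma sum_fin_fin_ite_add_eq (G : ℕ → ℕ → M) (hG : ∀ i, G i n = 0) :
    ∑ i : Fin n, ∑ j : Fin n, (if (i : ℕ) + j = n then G i j else 0)
      = ∑ i ∈ range n, G i (n - i) := by
  rw [Fin.sum_univ_eq_sum_range (fun i => ∑ j : Fin n, if i + (j : ℕ) = n then G i j else 0)]
  refine sum_congr rfl fun i hi => ?_
  rw [Fin.sum_univ_eq_sum_range (fun j => if i + j = n then G i j else 0),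
    sum_range_ite_eq_of_iff _ _ (a := n - i) fun j _ => by have := mem_range.1 hi; omega]
  split_ifs with h
  · rfl
  · rw [show n - i = n by omega, hG]

lemma sum_range_shift (g : ℕ → M) (h0 : g 0 = 0) (hn : g n = 0) :
    ∑ i ∈ range n, g (i + 1) = ∑ i ∈ range n, g i := by
  have h := sum_range_succ' g n
  rw [sum_range_succ, hn, h0, add_zero, add_zero] at h
  exact h.symm

end Sums

section Coordinates

variable {n : ℕ}

/-- `eCoord x i` is the coefficient of `e_{i+1}` in `x`, extended by zero to `i ≥ n`; thanks to
the extension, formulas such as `eCoord [x, y] k = x_t * eCoord y (k + 1) - …` need no boundary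
case at `k = n - 1`. -/
noncomputable def eCoord (x : V n) (i : ℕ) : ℝ := if h : i < n then x (Bas.e ⟨i, h⟩) else 0

noncomputable def fCoord (x : V n) (i : ℕ) : ℝ := if h : i < n then x (Bas.f ⟨i, h⟩) else 0

@[simp] lemma eCoord_val (x : V n) (i : Fin n) : eCoord x i = x (Bas.e i) := by
  simp [eCoord]

@[simp] lemma fCoord_val (x : V n) (i : Fin n) : fCoord x i = x (Bas.f i) := by
  simp [fCoord]

lemma eCoord_of_le (x : V n) {i : ℕ} (h : n ≤ i) : eCoord x i = 0 := dif_neg (by omega)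

lemma fCoord_of_le (x : V n) {i : ℕ} (h : n ≤ i) : fCoord x i = 0 := dif_neg (by omega)

@[simp] lemma eCoord_self (x : V n) : eCoord x n = 0 := eCoord_of_le x le_rfl

@[simp] lemma fCoord_self (x : V n) : fCoord x n = 0 := fCoord_of_le x le_rfl

lemma bracket_apply_t (x y : V n) : bracket n x y Bas.t = 0 := rfl

lemma bracket_apply_z (x y : V n) :
    bracket n x y Bas.z
      = ∑ i ∈ range n, (eCoord x i * fCoord y (n - i) - fCoord x (n - i) * eCoord y i) := by
  simp only [bracket, ← eCoord_val, ← fCoord_val]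
  exact sum_fin_fin_ite_add_eq (fun i j => eCoord x i * fCoord y j - fCoord x j * eCoord y i)
    fun i => by simp

lemma eCoord_bracket (x y : V n) (i : ℕ) :
    eCoord (bracket n x y) i = x Bas.t * eCoord y (i + 1) - eCoord x (i + 1) * y Bas.t := by
  simp only [eCoord, bracket]
  split_ifs <;> first | rfl | simp | omega

lemma fCoord_bracket (x y : V n) (i : ℕ) :
    fCoord (bracket n x y) i = -(x Bas.t * fCoord y (i + 1)) + fCoord x (i + 1) * y Bas.t := by
  simp only [fCoord, bracket]
  split_ifs <;> first | rfl | simp | omega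

lemma lsa_apply_t (α β : ℝ) (x y : V n) : lsa n α β x y Bas.t = 0 := rfl

lemma lsa_apply_z (α β : ℝ) (x y : V n) :
    lsa n α β x y Bas.z = ∑ i ∈ range n, (γseq n α β i * (eCoord x i * fCoord y (n - i))
      + (γseq n α β i - 1) * (fCoord x (n - i) * eCoord y i)) := by
  simp only [lsa, ← eCoord_val, ← fCoord_val]
  exact sum_fin_fin_ite_add_eq (fun i j => γseq n α β i * (eCoord x i * fCoord y j)
      + (γseq n α β i - 1) * (fCoord x j * eCoord y i)) fun i => by simp

lemma eCoord_lsa (α β : ℝ) (x y : V n) (i : ℕ) :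
    eCoord (lsa n α β x y) i = αseq α (i + 1) * (x Bas.t * eCoord y (i + 1))
      + (αseq α (i + 1) - 1) * (eCoord x (i + 1) * y Bas.t) := by
  simp only [eCoord, lsa]
  split_ifs <;> first | rfl | simp | omega

lemma fCoord_lsa (α β : ℝ) (x y : V n) (i : ℕ) :
    fCoord (lsa n α β x y) i = βseq β (i + 1) * (x Bas.t * fCoord y (i + 1))
      + (βseq β (i + 1) + 1) * (fCoord x (i + 1) * y Bas.t) := by
  simp only [fCoord, lsa]
  split_ifs <;> first | rfl | simp | omega

lemma omegaForm_eq_sum_range (lam : ℝ) (x y : V n) :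
    omegaForm n lam x y = x Bas.t * y Bas.z - x Bas.z * y Bas.t
      + ∑ i ∈ range n,
          (lam - i) * (eCoord x i * fCoord y (n - 1 - i) - fCoord x (n - 1 - i) * eCoord y i) := by
  rw [omegaForm, ← Fin.sum_univ_eq_sum_range (fun i =>
    (lam - i) * (eCoord x i * fCoord y (n - 1 - i) - fCoord x (n - 1 - i) * eCoord y i))]
  congr 1
  refine sum_congr rfl fun i _ => ?_
  have h : n - 1 - (i : ℕ) < n := by omega
  simp [fCoord, h]

@[simp] lemma bas_apply (b b' : Bas n) : bas n b b' = if b' = b then 1 else 0 :=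
  Pi.single_apply b 1 b'

@[simp] lemma eCoord_bas_e (j : Fin n) (i : ℕ) :
    eCoord (bas n (Bas.e j)) i = if i = j then 1 else 0 := by
  have := j.isLt
  simp only [eCoord, bas, Pi.single_apply, Bas.e.injEq, Fin.ext_iff]
  split_ifs <;> first | rfl | omega

@[simp] lemma fCoord_bas_f (j : Fin n) (i : ℕ) :
    fCoord (bas n (Bas.f j)) i = if i = j then 1 else 0 := by
  have := j.isLt
  simp only [fCoord, bas, Pi.single_apply, Bas.f.injEq, Fin.ext_iff]
  split_ifs <;> first | rfl | omega

@[simp] lemma eCoord_bas_f (j : Fin n) (i : ℕ) : eCoord (bas n (Bas.f j)) i = 0 := by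
  simp [eCoord]

@[simp] lemma fCoord_bas_e (j : Fin n) (i : ℕ) : fCoord (bas n (Bas.e j)) i = 0 := by
  simp [fCoord]

@[simp] lemma eCoord_bas_t (i : ℕ) : eCoord (bas n Bas.t) i = 0 := by simp [eCoord]

@[simp] lemma fCoord_bas_t (i : ℕ) : fCoord (bas n Bas.t) i = 0 := by simp [fCoord]

lemma mk_sub_one_sub_eq_rev (i : Fin n) (h : n - 1 - (i : ℕ) < n) :
    (⟨n - 1 - i, h⟩ : Fin n) = i.rev :=
  Fin.ext (by simp only [Fin.val_rev]; omega)

lemma omegaForm_bas_z (lam : ℝ) (v : V n) : omegaForm n lam v (bas n Bas.z) = v Bas.t := by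
  simp [omegaForm]

lemma omegaForm_bas_t (lam : ℝ) (v : V n) : omegaForm n lam v (bas n Bas.t) = -v Bas.z := by
  simp [omegaForm]

lemma omegaForm_bas_f_rev (lam : ℝ) (v : V n) (k : Fin n) :
    omegaForm n lam v (bas n (Bas.f k.rev)) = (lam - k) * v (Bas.e k) := by
  simp [omegaForm, mk_sub_one_sub_eq_rev]

lemma omegaForm_bas_e_rev (lam : ℝ) (v : V n) (k : Fin n) :
    omegaForm n lam v (bas n (Bas.e k.rev)) = -((lam - k.rev) * v (Bas.f k)) := by
  simp [omegaForm, mk_sub_one_sub_eq_rev]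

lemma omegaForm_bracket_bas_z (lam : ℝ) (x y : V n) :
    omegaForm n lam y (bracket n x (bas n Bas.z)) = 0 := by
  simp [omegaForm, bracket]

lemma omegaForm_bracket_bas_t (lam : ℝ) (x y : V n) :
    omegaForm n lam y (bracket n x (bas n Bas.t)) = ∑ i ∈ range n,
      (lam - i) * (eCoord y i * fCoord x (n - i) + fCoord y (n - 1 - i) * eCoord x (i + 1)) := by
  simp [omegaForm_eq_sum_range, bracket_apply_z, bracket_apply_t, eCoord_bracket, fCoord_bracket]
  refine sum_congr rfl fun i hi => ?_
  rw [show n - 1 - i + 1 = n - i by have := mem_range.1 hi; omega]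

lemma bracket_bas_f_apply_z (x : V n) (j : Fin n) :
    bracket n x (bas n (Bas.f j)) Bas.z = eCoord x (n - j) := by
  simp [bracket_apply_z]
  rw [sum_range_ite_eq_of_iff _ _ (a := n - j) fun i _ => by omega]
  split_ifs with h
  · rfl
  · rw [eCoord_of_le x (by omega)]

lemma omegaForm_bracket_bas_f (lam : ℝ) (x y : V n) (j : Fin n) :
    omegaForm n lam y (bracket n x (bas n (Bas.f j)))
      = y Bas.t * eCoord x (n - j) - (lam - (n - j)) * (eCoord y (n - j) * x Bas.t) := by
  simp [omegaForm_eq_sum_range, bracket_bas_f_apply_z, bracket_apply_t, eCoord_bracket,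
    fCoord_bracket]
  rw [sum_range_ite_eq_of_iff _ _ (a := n - j) fun i _ => by omega]
  split_ifs with h
  · push_cast [j.isLt.le]
    ring
  · rw [eCoord_of_le y (by omega)]
    ring

lemma omegaForm_bracket_bas_e (lam : ℝ) (x y : V n) (j : Fin n) :
    omegaForm n lam y (bracket n x (bas n (Bas.e j)))
      = -(y Bas.t * fCoord x (n - j)) - (lam - j + 1) * (fCoord y (n - j) * x Bas.t) := by
  simp [omegaForm_eq_sum_range, bracket_apply_z, bracket_apply_t, eCoord_bracket, fCoord_bracket]
  rcases Nat.eq_zero_or_pos (j : ℕ) with hj | hj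
  · simp [hj]
  · rw [sum_range_ite_eq_of_iff _ _ (a := j - 1) fun i _ => by omega, if_pos (by omega),
      show n - 1 - (j - 1) = n - j by omega]
    push_cast [hj]
    ring

end Coordinates

section Parameters

variable {n : ℕ} {lam : ℝ}

lemma αseq_eq (h0 : lam ≠ 0) (m : ℕ) :
    αseq ((lam - 1) / lam) m = (lam - m) / (lam - m + 1) := by
  rw [αseq, show m * ((lam - 1) / lam - 1) + 1 = (lam - m) / lam by field_simp; ring,
    show ((lam - 1) / lam - 1) * (m - 1) + 1 = (lam - m + 1) / lam by field_simp; ring,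
    div_div_div_cancel_right₀ h0]

lemma βseq_eq (hμ : lam - n + 1 ≠ 0) (m : ℕ) :
    βseq (-((lam - n + 2) / (lam - n + 1))) m = -((lam - n + 1 + m) / (lam - n + m)) := by
  rw [βseq, show m * (-((lam - n + 2) / (lam - n + 1)) + 1) - 1
      = -(lam - n + 1 + m) / (lam - n + 1) by field_simp; ring,
    show -(-((lam - n + 2) / (lam - n + 1)) + 1) * (m - 1) + 1
      = (lam - n + m) / (lam - n + 1) by field_simp; ring,
    div_div_div_cancel_right₀ hμ, neg_div]

lemma γseq_eq (h0 : lam ≠ 0) (hμ : lam - n + 1 ≠ 0) (i : ℕ) :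
    γseq n ((lam - 1) / lam) (-((lam - n + 2) / (lam - n + 1))) i = lam - i + 1 := by
  have h : lam * (lam - n + 1) ≠ 0 := mul_ne_zero h0 hμ
  rw [γseq, show ((lam - 1) / lam - 1) * ((n - i) * (-((lam - n + 2) / (lam - n + 1)) + 1) - 1)
      = (lam - i + 1) / (lam * (lam - n + 1)) by field_simp; ring,
    show n * ((lam - 1) / lam - 1) * (-((lam - n + 2) / (lam - n + 1)) + 1) - ((lam - 1) / lam - 1)
      + -((lam - n + 2) / (lam - n + 1)) + 1 = 1 / (lam * (lam - n + 1)) by field_simp; ring,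
    div_div_div_cancel_right₀ h, div_one]

lemma lsa_apply_z_eq (h0 : lam ≠ 0) (hμ : lam - n + 1 ≠ 0) (x y : V n) :
    lsa n ((lam - 1) / lam) (-((lam - n + 2) / (lam - n + 1))) x y Bas.z = ∑ i ∈ range n,
      (lam - i) * (eCoord y i * fCoord x (n - i) + fCoord y (n - 1 - i) * eCoord x (i + 1)) := by
  have hshift := sum_range_shift (n := n)
    (fun i => (lam - i + 1) * (eCoord x i * fCoord y (n - i))) (by simp) (by simp)
  rw [lsa_apply_z]
  simp only [γseq_eq h0 hμ]
  rw [sum_add_distrib, ← hshift, ← sum_add_distrib]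
  refine sum_congr rfl fun i hi => ?_
  rw [show n - (i + 1) = n - 1 - i by omega]
  push_cast
  ring

lemma lsa_apply_e_eq (h0 : lam ≠ 0) (x y : V n) (k : Fin n) (hk : lam - k ≠ 0) :
    (lam - k) * lsa n ((lam - 1) / lam) (-((lam - n + 2) / (lam - n + 1))) x y (Bas.e k)
      = (lam - (k + 1)) * (eCoord y (k + 1) * x Bas.t) - y Bas.t * eCoord x (k + 1) := by
  rw [← eCoord_val (lsa n _ _ x y) k, eCoord_lsa, αseq_eq h0]
  push_cast
  rw [show lam - (k + 1) + 1 = lam - k by ring]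
  field_simp
  ring

lemma lsa_apply_f_eq (hμ : lam - n + 1 ≠ 0) (x y : V n) (k : Fin n)
    (hk : lam - n + 1 + k ≠ 0) :
    (lam - n + 1 + k) * lsa n ((lam - 1) / lam) (-((lam - n + 2) / (lam - n + 1))) x y (Bas.f k)
      = -((lam - n + 2 + k) * (fCoord y (k + 1) * x Bas.t)) - y Bas.t * fCoord x (k + 1) := by
  rw [← fCoord_val (lsa n _ _ x y) k, fCoord_lsa, βseq_eq hμ]
  push_cast
  rw [show lam - n + (k + 1) = lam - n + 1 + k by ring]
  field_simp
  ring

end Parameters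

def IsInducedProduct (n : ℕ) (lam : ℝ) (D : V n → V n → V n) : Prop :=
  ∀ x y w : V n, omegaForm n lam (D x y) w = -omegaForm n lam y (bracket n x w)

namespace IsInducedProduct

variable {n : ℕ} {lam : ℝ} {D : V n → V n → V n}

lemma apply_t (hD : IsInducedProduct n lam D) (x y : V n) : D x y Bas.t = 0 := by
  simpa [omegaForm_bas_z, omegaForm_bracket_bas_z] using hD x y (bas n Bas.z)

lemma apply_z (hD : IsInducedProduct n lam D) (x y : V n) : D x y Bas.z = ∑ i ∈ range n,
    (lam - i) * (eCoord y i * fCoord x (n - i) + fCoord y (n - 1 - i) * eCoord x (i + 1)) := by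
  simpa [omegaForm_bas_t, omegaForm_bracket_bas_t] using hD x y (bas n Bas.t)

lemma apply_e (hD : IsInducedProduct n lam D) (x y : V n) (k : Fin n) :
    (lam - k) * D x y (Bas.e k)
      = (lam - (k + 1)) * (eCoord y (k + 1) * x Bas.t) - y Bas.t * eCoord x (k + 1) := by
  have h := hD x y (bas n (Bas.f k.rev))
  rw [omegaForm_bas_f_rev, omegaForm_bracket_bas_f, Fin.val_rev,
    show n - (n - (k + 1)) = k + 1 by omega, Nat.cast_sub (by omega : (k : ℕ) + 1 ≤ n)] at h
  push_cast at h
  linear_combination h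

lemma apply_f (hD : IsInducedProduct n lam D) (x y : V n) (k : Fin n) :
    (lam - n + 1 + k) * D x y (Bas.f k)
      = -((lam - n + 2 + k) * (fCoord y (k + 1) * x Bas.t)) - y Bas.t * fCoord x (k + 1) := by
  have h := hD x y (bas n (Bas.e k.rev))
  rw [omegaForm_bas_e_rev, omegaForm_bracket_bas_e, Fin.val_rev,
    show n - (n - (k + 1)) = k + 1 by omega, neg_inj,
    Nat.cast_sub (by omega : (k : ℕ) + 1 ≤ n)] at h
  push_cast at h
  linear_combination h

end IsInducedProduct

theorem stmt15_general (n : ℕ) (lam : ℝ) (hlam : ∀ m : ℤ, lam ≠ (m : ℝ))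
    (D : V n → V n → V n)
    (hD : ∀ x y w : V n, omegaForm n lam (D x y) w = -omegaForm n lam y (bracket n x w)) :
    D = lsa n ((lam - 1) / lam) (-((lam - (n : ℝ) + 2) / (lam - (n : ℝ) + 1))) := by
  have hne (m : ℤ) : lam - m ≠ 0 := sub_ne_zero.2 (hlam m)
  have h0 : lam ≠ 0 := by simpa using hne 0
  have hμ : lam - n + 1 ≠ 0 := by simpa [sub_add] using hne (n - 1)
  funext x y b
  cases b with
  | t => rw [IsInducedProduct.apply_t hD, lsa_apply_t]
  | z => rw [IsInducedProduct.apply_z hD, lsa_apply_z_eq h0 hμ]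
  | e k =>
    have hk : lam - k ≠ 0 := by simpa using hne k
    exact mul_left_cancel₀ hk
      ((IsInducedProduct.apply_e hD x y k).trans (lsa_apply_e_eq h0 x y k hk).symm)
  | f k =>
    have hk : lam - n + 1 + k ≠ 0 := by simpa [sub_add, sub_sub] using hne (n - 1 - k)
    exact mul_left_cancel₀ hk
      ((IsInducedProduct.apply_f hD x y k).trans (lsa_apply_f_eq hμ x y k hk).symm)

/-- the left-symmetric structure induced by `ω_λ` (characterized by
`ω_λ(x ∆ y, w) = -ω_λ(y, [x, w])`) coincides with `∆_{(α,β)}` for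
`α = (λ-1)/λ` and `β = -(λ-n+2)/(λ-n+1)`. -/
theorem stmt15 (n : ℕ) (hn : 2 ≤ n) (lam : ℝ) (hlam : ∀ m : ℤ, lam ≠ (m : ℝ))
    (D : V n → V n → V n)
    (hD : ∀ x y w : V n, omegaForm n lam (D x y) w = -omegaForm n lam y (bracket n x w)) :
    D = lsa n ((lam - 1) / lam) (-((lam - (n : ℝ) + 2) / (lam - (n : ℝ) + 1))) :=
  stmt15_general n lam hlam D hD

end Paper
end
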